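/- arXiv:1607.01245 — 2 statements merged into one kernel-verified Lean document; each statement's English description precedes it below -/
import Mathlib

section
/- Let N ≥ 1 be an integer and let M > 1, b > 0, ℓ > 1, K > 0 and w > 0 satisfy 2N(M−1)/b ≤ w ≤ ( 1 + (b²/4) (ℓ − 1 + ℓ/K)² )^{−1/2}. Then for every s > 0 and every ξ ∈ ℝ^N, the function ū(t,x) = b^{1/(1−M)} ( ℓ/s − 1/(s+wt) )^{1/(1−M)} ( 1 − |ξ − x|²/(s+wt)² )^{1/(M−1)} satisfies, at every point of the open set Q_{s,ξ} = { (t,x) ∈ (0, s/(wK)) × ℝ^N : |x − ξ| < s + wt }, the pointwise differential inequality ∂_t ū ≤ div_x ( ū ∇_x(ū^{M−1}) / √(1 + |∇_x(ū^{M−1})|²) ). -/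
/-!
On the ball `‖x - ξ‖ < R`, `R = s + w t`, the pressure `ū ^ (M - 1) = (1 - ‖x - ξ‖² / R²) / (b c)`,
`c = ℓ / s - 1 / R`, is a concave quadratic with gradient `-κ (x - ξ)`, `κ = 2 / (b c R²)`; hence
the flux is the radial field `F (‖x - ξ‖²) • (x - ξ)` and its divergence is `N F(ρ) + 2 ρ F'(ρ)`.
After division by `ū > 0`, with `α = 1 / (M - 1)`, `ρ = ‖x - ξ‖²` and `P = √(1 + κ² ρ)`, the
inequality reads
  `α w (2 ρ / (R (R² - ρ)) - 1 / (c R²)) ≤ -N κ / P + 2 α κ ρ / ((R² - ρ) P) + κ³ ρ / P³`.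
The lower bound on `w` gives `N κ ≤ α w / (c R²)`, and the upper bound, combined with
`c R ≤ ℓ - 1 + ℓ / K` for `t < s / (w K)`, gives `w P ≤ κ R`, which compares the two drift terms.
-/

open RealInnerProductSpace

noncomputable section

def divergence {N : ℕ} (V : EuclideanSpace ℝ (Fin N) → EuclideanSpace ℝ (Fin N))
    (x : EuclideanSpace ℝ (Fin N)) : ℝ :=
  ∑ i, ⟪fderiv ℝ V x (EuclideanSpace.single i 1), EuclideanSpace.single i 1⟫

/-- The flux `u ∇(u^{M−1}) / √(1 + |∇(u^{M−1})|²)` of the speed-limited porous medium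
equation, as a spatial vector field at time `t`. -/
def fluxSL {N : ℕ} (M : ℝ) (u : ℝ → EuclideanSpace ℝ (Fin N) → ℝ) (t : ℝ)
    (x : EuclideanSpace ℝ (Fin N)) : EuclideanSpace ℝ (Fin N) :=
  (u t x / Real.sqrt (1 + ‖gradient (fun y => u t y ^ (M-1)) x‖ ^ 2)) •
    gradient (fun y => u t y ^ (M-1)) x

def uSL {N : ℕ} (M b ℓ w s : ℝ) (ξ : EuclideanSpace ℝ (Fin N)) (t : ℝ)
    (x : EuclideanSpace ℝ (Fin N)) : ℝ :=
  b ^ (1/(1-M)) * (ℓ/s - 1/(s+w*t)) ^ (1/(1-M)) *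
    (1 - ‖ξ - x‖ ^ 2 / (s+w*t) ^ 2) ^ (1/(M-1))

section Divergence

variable {N : ℕ} {x : EuclideanSpace ℝ (Fin N)}

lemma Filter.EventuallyEq.divergence_eq
    {V W : EuclideanSpace ℝ (Fin N) → EuclideanSpace ℝ (Fin N)} (h : V =ᶠ[nhds x] W) :
    divergence V x = divergence W x := by
  simp only [divergence, h.fderiv_eq]

lemma divergence_smul {f : EuclideanSpace ℝ (Fin N) → ℝ} {f' : EuclideanSpace ℝ (Fin N) →L[ℝ] ℝ}
    {V : EuclideanSpace ℝ (Fin N) → EuclideanSpace ℝ (Fin N)}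
    (hf : HasFDerivAt f f' x) (hV : DifferentiableAt ℝ V x) :
    divergence (fun y => f y • V y) x = f x * divergence V x + f' (V x) := by
  have hexp : f' (V x) =
      ∑ i, ⟪V x, EuclideanSpace.single i 1⟫ * f' (EuclideanSpace.single i 1) := by
    conv_lhs => rw [← (EuclideanSpace.basisFun (Fin N) ℝ).sum_repr' (V x)]
    simp [real_inner_comm]
  have hd : HasFDerivAt (fun y => f y • V y) _ x := hf.smul hV.hasFDerivAt
  rw [divergence, hd.fderiv, hexp, divergence, Finset.mul_sum, ← Finset.sum_add_distrib]
  refine Finset.sum_congr rfl fun i _ => ?_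
  simp [inner_add_left, real_inner_smul_left, mul_comm]

lemma divergence_sub_const (ξ : EuclideanSpace ℝ (Fin N)) :
    divergence (fun y => y - ξ) x = N := by
  simp [divergence, fderiv_sub_const]

lemma divergence_radial {ξ : EuclideanSpace ℝ (Fin N)} {F : ℝ → ℝ} {F' : ℝ}
    (hF : HasDerivAt F F' (‖x - ξ‖ ^ 2)) :
    divergence (fun y => F (‖y - ξ‖ ^ 2) • (y - ξ)) x
      = N * F (‖x - ξ‖ ^ 2) + 2 * ‖x - ξ‖ ^ 2 * F' := by
  have hnorm : HasFDerivAt (fun y => ‖y - ξ‖ ^ 2) _ x := ((hasFDerivAt_id x).sub_const ξ).norm_sq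
  have hFn : HasFDerivAt (fun y => F (‖y - ξ‖ ^ 2)) _ x := hF.comp_hasFDerivAt x hnorm
  rw [divergence_smul hFn (V := fun y => y - ξ) (differentiableAt_id.sub_const ξ),
    divergence_sub_const]
  simp only [id_eq, ContinuousLinearMap.comp_id, smul_apply, coe_innerSL_apply,
    real_inner_self_eq_norm_sq, nsmul_eq_mul, Nat.cast_ofNat, smul_eq_mul]
  ring

end Divergence

def capProfile (M b c R ρ : ℝ) : ℝ :=
  b ^ (1/(1-M)) * c ^ (1/(1-M)) * (1 - ρ / R ^ 2) ^ (1/(M-1))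

def capFlux (M b c R κ ρ : ℝ) : ℝ :=
  -κ * capProfile M b c R ρ / √(1 + κ ^ 2 * ρ)

section CapProfile

variable {M b c R ρ : ℝ}

lemma one_sub_div_sq_pos (hR : R ≠ 0) (hρ : ρ < R ^ 2) : 0 < 1 - ρ / R ^ 2 := by
  rw [sub_pos, div_lt_one (by positivity)]
  exact hρ

lemma capProfile_pos (hb : 0 < b) (hc : 0 < c) (hR : R ≠ 0) (hρ : ρ < R ^ 2) :
    0 < capProfile M b c R ρ := by
  unfold capProfile
  have := one_sub_div_sq_pos hR hρ
  positivity

lemma capProfile_rpow_sub_one (hM : 1 < M) (hb : 0 < b) (hc : 0 < c) (hR : R ≠ 0)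
    (hρ : ρ < R ^ 2) :
    capProfile M b c R ρ ^ (M - 1) = (1 - ρ / R ^ 2) / (b * c) := by
  have hg := one_sub_div_sq_pos hR hρ
  have hexp : 1 / (1 - M) * (M - 1) = -1 := by
    rw [div_mul_eq_mul_div, div_eq_iff (by linarith)]; ring
  unfold capProfile
  rw [Real.mul_rpow (by positivity) (by positivity), Real.mul_rpow (by positivity) (by positivity),
    ← Real.rpow_mul hb.le, ← Real.rpow_mul hc.le, ← Real.rpow_mul hg.le, hexp,
    one_div_mul_cancel (by linarith), Real.rpow_one, Real.rpow_neg_one, Real.rpow_neg_one]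
  field_simp

lemma hasDerivAt_capProfile (hR : R ≠ 0) (hρ : ρ < R ^ 2) :
    HasDerivAt (capProfile M b c R) (-(1/(M-1)) * capProfile M b c R ρ / (R ^ 2 - ρ)) ρ := by
  have hg := one_sub_div_sq_pos hR hρ
  have hlin : HasDerivAt (fun ρ' => 1 - ρ' / R ^ 2) (-(1 / R ^ 2)) ρ := by
    simpa using ((hasDerivAt_id ρ).div_const (R ^ 2)).const_sub 1
  refine ((hlin.rpow_const (p := 1/(M-1)) (Or.inl hg.ne')).const_mul
    (b ^ (1/(1-M)) * c ^ (1/(1-M)))).congr_deriv ?_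
  have hR2 : R ^ 2 - ρ ≠ 0 := by linarith
  rw [capProfile, Real.rpow_sub_one hg.ne']
  field_simp

lemma hasDerivAt_capProfile_comp {c R : ℝ → ℝ} {c' R' t : ℝ} (hc : HasDerivAt c c' t)
    (hR : HasDerivAt R R' t) (hc0 : 0 < c t) (hR0 : 0 < R t) (hρ : ρ < R t ^ 2) :
    HasDerivAt (fun τ => capProfile M b (c τ) (R τ) ρ)
      (1/(M-1) * (2 * ρ * R' / (R t * (R t ^ 2 - ρ)) - c' / c t) * capProfile M b (c t) (R t) ρ)
      t := by
  have hg := one_sub_div_sq_pos hR0.ne' hρ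
  have hgt : HasDerivAt (fun τ => 1 - ρ / R τ ^ 2) (2 * ρ * R' / R t ^ 3) t := by
    have hsq : HasDerivAt (fun τ => R τ ^ 2) (2 * R t * R') t := by
      simpa using hR.fun_pow 2
    refine (((hasDerivAt_const t ρ).fun_div hsq (by positivity)).const_sub 1).congr_deriv ?_
    field_simp
    ring
  refine (((hc.rpow_const (p := 1/(1-M)) (Or.inl hc0.ne')).const_mul (b ^ (1/(1-M)))).mul
    (hgt.rpow_const (p := 1/(M-1)) (Or.inl hg.ne'))).congr_deriv ?_
  have hR2 : R t ^ 2 - ρ ≠ 0 := by linarith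
  have hβ : (1:ℝ) / (1 - M) = -(1 / (M - 1)) := by
    rw [show (1:ℝ) - M = -(M - 1) by ring, div_neg]
  rw [capProfile, Real.rpow_sub_one hc0.ne', Real.rpow_sub_one hg.ne', hβ]
  field_simp
  ring

end CapProfile

lemma hasDerivAt_capFlux {M b c R κ ρ : ℝ} (hR : R ≠ 0) (hρ0 : 0 ≤ ρ) (hρ : ρ < R ^ 2) :
    HasDerivAt (capFlux M b c R κ)
      (κ * capProfile M b c R ρ *
        (1/(M-1) / ((R ^ 2 - ρ) * √(1 + κ ^ 2 * ρ)) + κ ^ 2 / (2 * √(1 + κ ^ 2 * ρ) ^ 3))) ρ := by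
  have hP : 0 < √(1 + κ ^ 2 * ρ) := Real.sqrt_pos.mpr (by positivity)
  have hlin : HasDerivAt (fun ρ' => 1 + κ ^ 2 * ρ') (κ ^ 2) ρ := by
    simpa using ((hasDerivAt_id ρ).const_mul (κ ^ 2)).const_add 1
  refine (((hasDerivAt_capProfile hR hρ).const_mul (-κ)).div (hlin.sqrt (by positivity))
    hP.ne').congr_deriv ?_
  have hR2 : R ^ 2 - ρ ≠ 0 := by linarith
  have hP2 : √(1 + κ ^ 2 * ρ) ^ 2 = 1 + κ ^ 2 * ρ := Real.sq_sqrt (by positivity)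
  field_simp
  ring

section Gradient

variable {N : ℕ} {M b c R : ℝ} {ξ : EuclideanSpace ℝ (Fin N)}

lemma hasGradientAt_quadratic (x : EuclideanSpace ℝ (Fin N)) (a k : ℝ) :
    HasGradientAt (fun y => a - k * ‖y - ξ‖ ^ 2) (-(2 * k) • (x - ξ)) x := by
  rw [hasGradientAt_iff_hasFDerivAt]
  refine ((((hasFDerivAt_id x).sub_const ξ).norm_sq).const_mul k |>.const_sub a).congr_fderiv ?_
  ext e
  simp only [id_eq, map_sub, ContinuousLinearMap.comp_id, neg_apply, smul_apply, sub_apply,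
    coe_innerSL_apply, nsmul_eq_mul, Nat.cast_ofNat, smul_eq_mul, neg_smul, map_neg, map_smul,
    InnerProductSpace.toDual_apply_apply, neg_inj]
  ring

lemma hasGradientAt_capProfile_rpow {u : EuclideanSpace ℝ (Fin N) → ℝ}
    (hu : ∀ y, u y = capProfile M b c R (‖y - ξ‖ ^ 2)) (hM : 1 < M) (hb : 0 < b) (hc : 0 < c)
    (hR : 0 < R) {x : EuclideanSpace ℝ (Fin N)} (hx : ‖x - ξ‖ < R) :
    HasGradientAt (fun y => u y ^ (M - 1)) (-(2 / (b * c * R ^ 2)) • (x - ξ)) x := by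
  have hquad := hasGradientAt_quadratic (ξ := ξ) x (1 / (b * c)) (1 / (b * c * R ^ 2))
  rw [mul_one_div] at hquad
  refine hquad.congr_of_eventuallyEq ?_
  filter_upwards [Metric.isOpen_ball.mem_nhds (mem_ball_iff_norm.mpr hx)] with y hy
  rw [mem_ball_iff_norm] at hy
  rw [hu, capProfile_rpow_sub_one hM hb hc hR.ne' (by gcongr)]
  field_simp

end Gradient

section Flux

variable {N : ℕ} {M b c R t : ℝ} {ξ x : EuclideanSpace ℝ (Fin N)}
  {u : ℝ → EuclideanSpace ℝ (Fin N) → ℝ}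

lemma fluxSL_eventuallyEq_capFlux (hu : ∀ y, u t y = capProfile M b c R (‖y - ξ‖ ^ 2))
    (hM : 1 < M) (hb : 0 < b) (hc : 0 < c) (hR : 0 < R) (hx : ‖x - ξ‖ < R) :
    fluxSL M u t =ᶠ[nhds x]
      fun y => capFlux M b c R (2 / (b * c * R ^ 2)) (‖y - ξ‖ ^ 2) • (y - ξ) := by
  filter_upwards [Metric.isOpen_ball.mem_nhds (mem_ball_iff_norm.mpr hx)] with y hy
  rw [fluxSL, (hasGradientAt_capProfile_rpow (hu := hu) hM hb hc hR
    (mem_ball_iff_norm.mp hy)).gradient, norm_smul, mul_pow, Real.norm_eq_abs, sq_abs, neg_sq,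
    smul_smul, hu, capFlux]
  congr 1
  ring

lemma divergence_fluxSL_capProfile (hu : ∀ y, u t y = capProfile M b c R (‖y - ξ‖ ^ 2))
    (hM : 1 < M) (hb : 0 < b) (hc : 0 < c) (hR : 0 < R) (hx : ‖x - ξ‖ < R) :
    divergence (fluxSL M u t) x =
      N * capFlux M b c R (2 / (b * c * R ^ 2)) (‖x - ξ‖ ^ 2) + 2 * ‖x - ξ‖ ^ 2 *
        (2 / (b * c * R ^ 2) * capProfile M b c R (‖x - ξ‖ ^ 2) *
          (1/(M-1) / ((R ^ 2 - ‖x - ξ‖ ^ 2) * √(1 + (2 / (b * c * R ^ 2)) ^ 2 * ‖x - ξ‖ ^ 2)) +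
            (2 / (b * c * R ^ 2)) ^ 2 /
              (2 * √(1 + (2 / (b * c * R ^ 2)) ^ 2 * ‖x - ξ‖ ^ 2) ^ 3))) := by
  rw [(fluxSL_eventuallyEq_capFlux hu hM hb hc hR hx).divergence_eq]
  exact divergence_radial (hasDerivAt_capFlux hR.ne' (by positivity) (by gcongr))

end Flux

lemma subsolution_ineq {n α w c R ρ κ P u : ℝ} (hu : 0 ≤ u) (hα : 0 < α) (hc : 0 < c)
    (hR : 0 < R) (hρ0 : 0 ≤ ρ) (hρ : ρ < R ^ 2) (hκ : 0 ≤ κ) (hP : 1 ≤ P) (hn : 0 ≤ n)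
    (hwP : w * P ≤ κ * R) (hnκ : n * κ * (c * R ^ 2) ≤ α * w) :
    α * (2 * ρ * w / (R * (R ^ 2 - ρ)) - w / R ^ 2 / c) * u ≤
      n * (-κ * u / P) + 2 * ρ * (κ * u * (α / ((R ^ 2 - ρ) * P) + κ ^ 2 / (2 * P ^ 3))) := by
  have hP0 : 0 < P := zero_lt_one.trans_le hP
  have hgap : 0 < R ^ 2 - ρ := by linarith
  have hdrift : α * (2 * ρ * w / (R * (R ^ 2 - ρ))) ≤ 2 * ρ * κ * α / ((R ^ 2 - ρ) * P) := by
    rw [mul_div_assoc', div_le_div_iff₀ (by positivity) (by positivity)]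
    have := mul_le_mul_of_nonneg_left hwP (by positivity : 0 ≤ 2 * ρ * α * (R ^ 2 - ρ))
    nlinarith
  have hdecay : n * κ ≤ α * (w / R ^ 2 / c) := by
    rw [div_div, mul_div_assoc', le_div_iff₀ (by positivity)]
    linarith
  have hnP : n * κ / P ≤ n * κ := div_le_self (by positivity) hP
  have hcube : 0 ≤ ρ * κ ^ 3 / P ^ 3 := by positivity
  calc α * (2 * ρ * w / (R * (R ^ 2 - ρ)) - w / R ^ 2 / c) * u
      = u * (α * (2 * ρ * w / (R * (R ^ 2 - ρ))) - α * (w / R ^ 2 / c)) := by ring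
    _ ≤ u * (-(n * κ / P) + 2 * ρ * κ * α / ((R ^ 2 - ρ) * P) + ρ * κ ^ 3 / P ^ 3) := by
      gcongr
      linarith
    _ = n * (-κ * u / P) + 2 * ρ * (κ * u * (α / ((R ^ 2 - ρ) * P) + κ ^ 2 / (2 * P ^ 3))) := by
      ring

lemma sq_mul_le_one_of_le_rpow {w X : ℝ} (hw : 0 ≤ w) (hX : 0 < X) (h : w ≤ X ^ (-(1:ℝ)/2)) :
    w ^ 2 * X ≤ 1 := by
  have hsq : (X ^ (-(1:ℝ)/2)) ^ 2 = X⁻¹ := by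
    rw [← Real.rpow_natCast, ← Real.rpow_mul hX.le]
    norm_num [Real.rpow_neg_one]
  calc w ^ 2 * X ≤ (X ^ (-(1:ℝ)/2)) ^ 2 * X := by gcongr
    _ = 1 := by rw [hsq, inv_mul_cancel₀ hX.ne']

lemma mul_sqrt_one_add_le {w b c R ρ L : ℝ} (hw : 0 ≤ w) (hb : 0 < b) (hc : 0 < c) (hR : 0 < R)
    (hρ : ρ ≤ R ^ 2) (hcR : c * R ≤ L) (h : w ^ 2 * (1 + b ^ 2 / 4 * L ^ 2) ≤ 1) :
    w * √(1 + (2 / (b * c * R ^ 2)) ^ 2 * ρ) ≤ 2 / (b * c * R ^ 2) * R := by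
  set q := 2 / (b * c * R) with hq
  have hq0 : 0 < q := by positivity
  have hκR : 2 / (b * c * R ^ 2) * R = q := by rw [hq]; field_simp
  have hqa : b * c * R / 2 * q = 1 := by rw [hq]; field_simp
  have ha : (b * c * R / 2) ^ 2 ≤ b ^ 2 / 4 * L ^ 2 := by
    have := pow_le_pow_left₀ (by positivity) hcR 2
    nlinarith
  have hκρ : (2 / (b * c * R ^ 2)) ^ 2 * ρ ≤ q ^ 2 := by
    rw [← hκR, mul_pow]
    gcongr
  rw [hκR, ← Real.sqrt_sq hw, ← Real.sqrt_mul (by positivity), Real.sqrt_le_left hq0.le]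
  calc w ^ 2 * (1 + (2 / (b * c * R ^ 2)) ^ 2 * ρ) ≤ w ^ 2 * (1 + q ^ 2) := by gcongr
    _ = q ^ 2 * (w ^ 2 * (1 + (b * c * R / 2) ^ 2)) := by
      linear_combination (-(w ^ 2) * (b * c * R / 2 * q + 1)) * hqa
    _ ≤ q ^ 2 * 1 := by
      gcongr
      exact le_trans (by gcongr) h
    _ = q ^ 2 := mul_one _

lemma div_sub_one_div_mul_le {ℓ s w t K : ℝ} (hℓ : 0 ≤ ℓ) (hs : 0 < s) (hw : 0 < w) (hK : 0 < K)
    (ht0 : 0 ≤ t) (ht : t < s / (w * K)) :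
    (ℓ / s - 1 / (s + w * t)) * (s + w * t) ≤ ℓ - 1 + ℓ / K := by
  have hwt : w * t * K ≤ s := by
    rw [lt_div_iff₀ (by positivity)] at ht
    linarith
  have hR : s + w * t ≠ 0 := by positivity
  have hexpand : (ℓ / s - 1 / (s + w * t)) * (s + w * t) = ℓ - 1 + ℓ * (w * t) / s := by
    field_simp
    ring
  have hshift : ℓ * (w * t) / s ≤ ℓ / K := by
    rw [div_le_div_iff₀ hs hK, mul_assoc]
    gcongr
  linarith

lemma uSL_eq_capProfile {N : ℕ} (M b ℓ w s : ℝ) (ξ : EuclideanSpace ℝ (Fin N)) (τ : ℝ)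
    (y : EuclideanSpace ℝ (Fin N)) :
    uSL M b ℓ w s ξ τ y = capProfile M b (ℓ / s - 1 / (s + w * τ)) (s + w * τ) (‖y - ξ‖ ^ 2) := by
  rw [norm_sub_rev]; rfl

lemma hasDerivAt_uSL {N : ℕ} {M b ℓ w s t : ℝ} {ξ x : EuclideanSpace ℝ (Fin N)}
    (hR : 0 < s + w * t) (hc : 0 < ℓ / s - 1 / (s + w * t)) (hx : ‖x - ξ‖ < s + w * t) :
    HasDerivAt (fun τ => uSL M b ℓ w s ξ τ x)
      (1/(M-1) * (2 * ‖x - ξ‖ ^ 2 * w / ((s + w * t) * ((s + w * t) ^ 2 - ‖x - ξ‖ ^ 2)) -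
          w / (s + w * t) ^ 2 / (ℓ / s - 1 / (s + w * t))) *
        capProfile M b (ℓ / s - 1 / (s + w * t)) (s + w * t) (‖x - ξ‖ ^ 2)) t := by
  have hRt : HasDerivAt (fun τ => s + w * τ) w t := by
    simpa using ((hasDerivAt_id t).const_mul w).const_add s
  have hct : HasDerivAt (fun τ => ℓ / s - 1 / (s + w * τ)) (w / (s + w * t) ^ 2) t := by
    simpa [one_div, div_eq_mul_inv] using (hRt.inv hR.ne').const_sub (ℓ / s)
  simp only [uSL_eq_capProfile]
  exact hasDerivAt_capProfile_comp hct hRt hc hR (by gcongr)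

lemma nat_mul_two_div_mul_le {n M b c R w : ℝ} (hM : 1 < M) (hb : 0 < b) (hc : c ≠ 0)
    (hR : R ≠ 0) (hw : 2 * n * (M - 1) / b ≤ w) :
    n * (2 / (b * c * R ^ 2)) * (c * R ^ 2) ≤ 1 / (M - 1) * w := by
  have hM1 : 0 < M - 1 := sub_pos.mpr hM
  calc _ = 2 * n * (M - 1) / b / (M - 1) := by field_simp
    _ ≤ w / (M - 1) := by gcongr
    _ = 1 / (M - 1) * w := by ring

/-- under the parameter constraint
`2N(M−1)/b ≤ w ≤ (1 + (b²/4)(ℓ−1+ℓ/K)²)^{-1/2}`, for every `s > 0` and `ξ ∈ ℝ^N` the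
function `ū(t,x) = b^{1/(1−M)} (ℓ/s − 1/(s+wt))^{1/(1−M)} (1 − |ξ−x|²/(s+wt)²)^{1/(M−1)}`
satisfies the pointwise inequality
`∂_t ū ≤ div_x ( ū ∇_x(ū^{M−1}) / √(1 + |∇_x(ū^{M−1})|²) )` at every point of
`Q_{s,ξ} = {(t,x) : 0 < t < s/(wK), |x − ξ| < s + wt}`. -/
theorem stmt_9 (N : ℕ) (hN : 1 ≤ N) (M b ℓ K w : ℝ)
    (hM : 1 < M) (hb : 0 < b) (hℓ : 1 < ℓ) (hK : 0 < K)
    (hw1 : 2 * N * (M - 1) / b ≤ w)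
    (hw2 : w ≤ (1 + b ^ 2 / 4 * (ℓ - 1 + ℓ / K) ^ 2) ^ (-(1:ℝ)/2)) :
    ∀ s : ℝ, 0 < s → ∀ ξ : EuclideanSpace ℝ (Fin N),
      ∀ (t : ℝ) (x : EuclideanSpace ℝ (Fin N)),
        0 < t → t < s / (w * K) → ‖x - ξ‖ < s + w * t →
        deriv (fun τ => uSL M b ℓ w s ξ τ x) t ≤
          divergence (fluxSL M (uSL M b ℓ w s ξ) t) x := by
  intro s hs ξ t x ht htK hx
  have hw : 0 < w := by
    have hN' : (0:ℝ) < N := by exact_mod_cast hN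
    exact lt_of_lt_of_le (by have := sub_pos.mpr hM; positivity) hw1
  have hR : 0 < s + w * t := by positivity
  have hc : 0 < ℓ / s - 1 / (s + w * t) := by
    rw [sub_pos, div_lt_div_iff₀ hR hs]
    nlinarith [mul_pos hw ht]
  have hρ : ‖x - ξ‖ ^ 2 < (s + w * t) ^ 2 := by gcongr
  have hwP := mul_sqrt_one_add_le hw.le hb hc hR hρ.le
    (div_sub_one_div_mul_le (by linarith) hs hw hK ht.le htK)
    (sq_mul_le_one_of_le_rpow hw.le (by positivity) hw2)
  rw [(hasDerivAt_uSL hR hc hx).deriv,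
    divergence_fluxSL_capProfile (uSL_eq_capProfile M b ℓ w s ξ t) hM hb hc hR hx]
  exact subsolution_ineq (capProfile_pos hb hc hR.ne' hρ).le (by simpa using hM) hc hR
    (by positivity) hρ (by positivity)
    (Real.one_le_sqrt.mpr (le_add_of_nonneg_right (by positivity))) (Nat.cast_nonneg N) hwP
    (nat_mul_two_div_mul_le hM hb hc.ne' hR.ne' hw1)

end
end

section
/- Let N ≥ 1 be an integer, m > 1 and r > 0. For 0 < |x| < r set η(x) = √(r² − |x|²), D(x) = √( η(x)² (1+η(x))² + |x|² ) and E(x) = (1+η(x))² + η(x)(1+η(x)) − 1. Then the vector field V(x) = − (1+η(x))^m x / D(x) satisfies, for every x with 0 < |x| < r, the identity div V(x) = − ( N (1+η)^m / D + |x|² (1+η)^m E / D³ − m |x|² (1+η)^{m−1} / (η D) ), where η, D, E are evaluated at x. -/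
/-!
The field is radial, `V(z) = φ(‖z‖²) z`, so `div V(x) = N φ(s) + 2 s φ'(s)` with `s = ‖x‖²`;
it remains to differentiate the one-variable profile `φ(t) = -(1+η)^m / D` with `η = √(r² - t)`.
Since `η' = -1/(2η)`, the radicand `η²(1+η)² + t` of `D` has derivative exactly `-E`, which is
where `E` comes from.
-/

open RealInnerProductSpace

noncomputable section

/-- `η(x) = √(r² − |x|²)`. -/
def ηf {N : ℕ} (r : ℝ) (x : EuclideanSpace ℝ (Fin N)) : ℝ :=
  Real.sqrt (r ^ 2 - ‖x‖ ^ 2)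

/-- `D(x) = √(η²(1+η)² + |x|²)`. -/
def Df {N : ℕ} (r : ℝ) (x : EuclideanSpace ℝ (Fin N)) : ℝ :=
  Real.sqrt ((ηf r x) ^ 2 * (1 + ηf r x) ^ 2 + ‖x‖ ^ 2)

/-- `E(x) = (1+η)² + η(1+η) − 1`. -/
def Ef {N : ℕ} (r : ℝ) (x : EuclideanSpace ℝ (Fin N)) : ℝ :=
  (1 + ηf r x) ^ 2 + ηf r x * (1 + ηf r x) - 1

section Divergence

variable {N : ℕ} {x : EuclideanSpace ℝ (Fin N)}

theorem divergence_smul_self {g : EuclideanSpace ℝ (Fin N) → ℝ}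
    {g' : EuclideanSpace ℝ (Fin N) →L[ℝ] ℝ} (hg : HasFDerivAt g g' x) :
    divergence (fun z => g z • z) x = N * g x + g' x := by
  have hV : HasFDerivAt (fun z => g z • z) _ x := hg.smul (hasFDerivAt_id x)
  have hterm : ∀ i : Fin N,
      ⟪fderiv ℝ (fun z => g z • z) x (EuclideanSpace.single i 1), EuclideanSpace.single i 1⟫
        = g x + x i * g' (EuclideanSpace.single i 1) := by
    intro i
    simp only [hV.fderiv, add_apply, smul_apply,
      ContinuousLinearMap.id_apply, ContinuousLinearMap.smulRight_apply, inner_add_left,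
      EuclideanSpace.inner_single_right, PiLp.smul_apply, PiLp.single_eq_same, smul_eq_mul,
      mul_one, Real.ringHom_apply, one_mul, add_right_inj]
    ring
  have hg'x : g' x = ∑ i, x i * g' (EuclideanSpace.single i 1) := by
    conv_lhs => rw [← (EuclideanSpace.basisFun (Fin N) ℝ).sum_repr x]
    simp
  rw [divergence, Finset.sum_congr rfl fun i _ => hterm i, Finset.sum_add_distrib, hg'x]
  simp

theorem divergence_radial_s14 {φ : ℝ → ℝ} {φ' : ℝ} (hφ : HasDerivAt φ φ' (‖x‖ ^ 2)) :
    divergence (fun z => φ (‖z‖ ^ 2) • z) x = N * φ (‖x‖ ^ 2) + 2 * ‖x‖ ^ 2 * φ' := by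
  have hg := hφ.comp_hasFDerivAt x (hasStrictFDerivAt_norm_sq x).hasFDerivAt
  rw [Function.comp_def] at hg
  rw [divergence_smul_self hg]
  simp only [smul_apply, coe_innerSL_apply, real_inner_self_eq_norm_sq,
    nsmul_eq_mul, Nat.cast_ofNat, smul_eq_mul]
  ring

end Divergence

section Profile

variable {c s : ℝ}

theorem hasDerivAt_sqrt_const_sub (hs : s < c) :
    HasDerivAt (fun t => √(c - t)) (-1 / (2 * √(c - s))) s := by
  have h := ((hasDerivAt_id s).const_sub c).sqrt (sub_ne_zero.2 hs.ne')
  simpa [neg_div] using h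

theorem hasDerivAt_one_add_sqrt_const_sub_rpow (m : ℝ) (hs : s < c) :
    HasDerivAt (fun t => (1 + √(c - t)) ^ m)
      (-(m * (1 + √(c - s)) ^ (m - 1)) / (2 * √(c - s))) s := by
  have hpos : 0 < 1 + √(c - s) := by positivity
  have h := (hasDerivAt_sqrt_const_sub hs).const_add 1 |>.rpow_const (p := m) (Or.inl hpos.ne')
  convert h using 1
  ring

theorem hasDerivAt_sqrt_profile (h₀ : 0 ≤ s) (hs : s < c) :
    HasDerivAt (fun t => √(√(c - t) ^ 2 * (1 + √(c - t)) ^ 2 + t))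
      (-((1 + √(c - s)) ^ 2 + √(c - s) * (1 + √(c - s)) - 1) /
        (2 * √(√(c - s) ^ 2 * (1 + √(c - s)) ^ 2 + s))) s := by
  have hη : 0 < √(c - s) := Real.sqrt_pos.2 (sub_pos.2 hs)
  have hη' := hasDerivAt_sqrt_const_sub hs
  have hP : HasDerivAt (fun t => √(c - t) ^ 2 * (1 + √(c - t)) ^ 2 + t)
      (-((1 + √(c - s)) ^ 2 + √(c - s) * (1 + √(c - s)) - 1)) s := by
    refine (((hη'.fun_pow 2).fun_mul ((hη'.const_add 1).fun_pow 2)).fun_add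
      (hasDerivAt_id' s)).congr_deriv ?_
    field_simp
    ring
  exact hP.sqrt (add_pos_of_pos_of_nonneg (by positivity) h₀).ne'

theorem hasDerivAt_neg_rpow_div_sqrt_profile (m : ℝ) (h₀ : 0 ≤ s) (hs : s < c) :
    HasDerivAt (fun t => -((1 + √(c - t)) ^ m / √(√(c - t) ^ 2 * (1 + √(c - t)) ^ 2 + t)))
      (m * (1 + √(c - s)) ^ (m - 1) /
          (2 * √(c - s) * √(√(c - s) ^ 2 * (1 + √(c - s)) ^ 2 + s))
        - (1 + √(c - s)) ^ m * ((1 + √(c - s)) ^ 2 + √(c - s) * (1 + √(c - s)) - 1) /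
          (2 * √(√(c - s) ^ 2 * (1 + √(c - s)) ^ 2 + s) ^ 3)) s := by
  have hη : 0 < √(c - s) := Real.sqrt_pos.2 (sub_pos.2 hs)
  have hD : 0 < √(√(c - s) ^ 2 * (1 + √(c - s)) ^ 2 + s) :=
    Real.sqrt_pos.2 (add_pos_of_pos_of_nonneg (by positivity) h₀)
  refine (((hasDerivAt_one_add_sqrt_const_sub_rpow m hs).div
    (hasDerivAt_sqrt_profile h₀ hs) hD.ne').neg).congr_deriv ?_
  field_simp
  ring

end Profile

theorem stmt_14_general (N : ℕ) (m r : ℝ) :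
    ∀ x : EuclideanSpace ℝ (Fin N), 0 < ‖x‖ → ‖x‖ < r →
      divergence (fun z => (-((1 + ηf r z) ^ m / Df r z)) • z) x =
        -(N * (1 + ηf r x) ^ m / Df r x
          + ‖x‖ ^ 2 * (1 + ηf r x) ^ m * Ef r x / (Df r x) ^ 3
          - m * ‖x‖ ^ 2 * (1 + ηf r x) ^ (m - 1) / (ηf r x * Df r x)) := by
  intro x _ hxr
  have hs : ‖x‖ ^ 2 < r ^ 2 := pow_lt_pow_left₀ hxr (norm_nonneg x) two_ne_zero
  refine (divergence_radial_s14
    (hasDerivAt_neg_rpow_div_sqrt_profile m (sq_nonneg ‖x‖) hs)).trans ?_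
  simp only [Ef, Df, ηf]
  ring

/-- the vector field `V(x) = −(1+η)^m x / D` satisfies, for `0 < |x| < r`,
`div V(x) = −( N(1+η)^m/D + |x|²(1+η)^m E/D³ − m|x|²(1+η)^{m−1}/(ηD) )`. -/
theorem stmt_14 (N : ℕ) (hN : 1 ≤ N) (m r : ℝ) (hm : 1 < m) (hr : 0 < r) :
    ∀ x : EuclideanSpace ℝ (Fin N), 0 < ‖x‖ → ‖x‖ < r →
      divergence (fun z => (-((1 + ηf r z) ^ m / Df r z)) • z) x =
        -(N * (1 + ηf r x) ^ m / Df r x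
          + ‖x‖ ^ 2 * (1 + ηf r x) ^ m * Ef r x / (Df r x) ^ 3
          - m * ‖x‖ ^ 2 * (1 + ηf r x) ^ (m - 1) / (ηf r x * Df r x)) :=
  stmt_14_general N m r

end
end
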